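/- arXiv:1205.1960 — 2 statements merged into one kernel-verified Lean document; each statement's English description precedes it below -/
import Mathlib

section
/- Let G be a finite connected undirected graph on n vertices with no isolated vertices, let A be its random-walk transition matrix (the (i,j) entry is 1/d(vᵢ) if vᵢ is adjacent to vⱼ and 0 otherwise), let f be the degree-distribution vector with coordinates d(vᵢ)/(2|E|), let 0 < c < 1, and let v = (1/n)𝟏 be the uniform personalization vector. Then the PageRank vector π (the vector with nonnegative coordinates, ‖π‖₁ = 1 and (cAᵀ + (1-c)v𝟏ᵀ)π = π) equals f if and only if G is regular, i.e., all vertices of G have the same degree. -/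
open Finset Matrix

/-!
For a row-stochastic `A` and `0 ≤ c < 1` the map `x ↦ c • (x ᵥ* A)` shrinks the `ℓ¹` norm by the
factor `c`, so the PageRank equation `x = c • (x ᵥ* A) + (1 - c) • v` has at most one solution.
The degree distribution `f` is stationary for the random walk (`f ᵥ* A = f`), hence it solves
that equation exactly when `(1 - c) • f = (1 - c) • v`, i.e. when `f` is uniform, which happens
exactly when all degrees agree.
-/

namespace Matrix

theorem vecMulVec_one_mulVec {R n : Type*} [CommSemiring R] [Fintype n] (v x : n → R) :
    vecMulVec v 1 *ᵥ x = (∑ i, x i) • v := by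
  rw [vecMulVec_mulVec, one_dotProduct, op_smul_eq_smul]

variable {R n : Type*} [CommRing R] [LinearOrder R] [IsStrictOrderedRing R]
  [Fintype n] [DecidableEq n] {M : Matrix n n R}

theorem sum_abs_vecMul_le_of_mem_rowStochastic (hM : M ∈ rowStochastic R n) (x : n → R) :
    ∑ j, |(x ᵥ* M) j| ≤ ∑ i, |x i| :=
  calc ∑ j, |(x ᵥ* M) j|
      ≤ ∑ j, ∑ i, |x i| * M i j := sum_le_sum fun j _ =>
        (abs_sum_le_sum_abs _ _).trans_eq <| sum_congr rfl fun i _ => by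
          rw [abs_mul, abs_of_nonneg (nonneg_of_mem_rowStochastic hM)]
    _ = ∑ i, |x i| := by
        rw [sum_comm]
        simp_rw [← mul_sum, sum_row_of_mem_rowStochastic hM, mul_one]

theorem eq_zero_of_smul_vecMul_eq (hM : M ∈ rowStochastic R n) {c : R} (hc0 : 0 ≤ c)
    (hc1 : c < 1) {x : n → R} (hx : c • (x ᵥ* M) = x) : x = 0 := by
  have habs : ∀ i ∈ univ, 0 ≤ |x i| := fun i _ => abs_nonneg (x i)
  have hle : ∑ i, |x i| ≤ c * ∑ i, |x i| :=
    calc ∑ i, |x i| = c * ∑ j, |(x ᵥ* M) j| := by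
          conv_lhs => rw [← hx]
          simp only [Pi.smul_apply, smul_eq_mul, abs_mul, abs_of_nonneg hc0, mul_sum]
      _ ≤ c * ∑ i, |x i| :=
          mul_le_mul_of_nonneg_left (sum_abs_vecMul_le_of_mem_rowStochastic hM x) hc0
  have hzero : ∑ i, |x i| = 0 := by nlinarith [sum_nonneg habs]
  funext i
  exact abs_eq_zero.1 ((sum_eq_zero_iff_of_nonneg habs).1 hzero i (mem_univ i))

theorem eq_of_smul_vecMul_add_eq (hM : M ∈ rowStochastic R n) {c : R} (hc0 : 0 ≤ c)
    (hc1 : c < 1) {b x y : n → R} (hx : c • (x ᵥ* M) + b = x) (hy : c • (y ᵥ* M) + b = y) :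
    x = y := by
  refine sub_eq_zero.1 (eq_zero_of_smul_vecMul_eq hM hc0 hc1 ?_)
  calc c • ((x - y) ᵥ* M) = (c • (x ᵥ* M) + b) - (c • (y ᵥ* M) + b) := by
        rw [sub_vecMul, smul_sub, add_sub_add_right_eq_sub]
    _ = x - y := by rw [hx, hy]

end Matrix

namespace SimpleGraph

variable {V : Type*} [Fintype V] (G : SimpleGraph V) [DecidableRel G.Adj]

noncomputable def randomWalkMatrix : Matrix V V ℝ :=
  Matrix.of fun i j => if G.Adj i j then 1 / (G.degree i : ℝ) else 0

noncomputable def degreeDistribution (i : V) : ℝ :=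
  G.degree i / (2 * #G.edgeFinset)

theorem sum_ite_adj {M : Type*} [AddCommMonoid M] (i : V) (a : M) :
    ∑ j, (if G.Adj i j then a else 0) = G.degree i • a := by
  rw [← sum_filter, sum_const, ← neighborFinset_eq_filter, card_neighborFinset_eq_degree]

theorem randomWalkMatrix_mem_rowStochastic [DecidableEq V] (hdeg : ∀ i, 0 < G.degree i) :
    G.randomWalkMatrix ∈ rowStochastic ℝ V := by
  refine mem_rowStochastic_iff_sum.2 ⟨fun i j => ?_, fun i => ?_⟩
  · simp only [randomWalkMatrix, of_apply]
    split_ifs <;> positivity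
  · simp only [randomWalkMatrix, of_apply, sum_ite_adj, nsmul_eq_mul]
    have := hdeg i
    field_simp

theorem degreeDistribution_vecMul_randomWalkMatrix :
    G.degreeDistribution ᵥ* G.randomWalkMatrix = G.degreeDistribution := by
  ext j
  have hterm : ∀ i, G.degreeDistribution i * G.randomWalkMatrix i j =
      if G.Adj j i then 1 / (2 * #G.edgeFinset : ℝ) else 0 := by
    intro i
    simp only [degreeDistribution, randomWalkMatrix, of_apply, G.adj_comm i j]
    split_ifs with h
    · have : 0 < G.degree i := (G.degree_pos_iff_exists_adj i).2 ⟨j, h.symm⟩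
      field_simp
    · rw [mul_zero]
  simp_rw [vecMul, dotProduct, hterm, sum_ite_adj, nsmul_eq_mul, mul_one_div, degreeDistribution]

theorem degreeDistribution_eq_uniform_iff (hdeg : ∀ i, 0 < G.degree i) :
    G.degreeDistribution = (fun _ => 1 / (Fintype.card V : ℝ)) ↔ ∃ d, G.IsRegularOfDegree d := by
  have hsum : (∑ i, G.degree i : ℝ) = 2 * #G.edgeFinset := by
    exact_mod_cast G.sum_degrees_eq_twice_card_edges
  have hcard (i : V) : (Fintype.card V : ℝ) ≠ 0 := by
    have : Nonempty V := ⟨i⟩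
    exact_mod_cast Fintype.card_ne_zero
  constructor
  · intro h
    refine ⟨2 * #G.edgeFinset / Fintype.card V, fun i => Nat.eq_div_of_mul_eq_left ?_ ?_⟩
    · exact_mod_cast hcard i
    · have hE : (2 * #G.edgeFinset : ℝ) ≠ 0 := by
        rw [← hsum]
        exact (sum_pos (fun j _ => Nat.cast_pos.2 (hdeg j)) ⟨i, mem_univ i⟩).ne'
      have := congrFun h i
      rw [degreeDistribution, div_eq_div_iff hE (hcard i), one_mul] at this
      exact_mod_cast this
  · rintro ⟨d, hd⟩
    funext i
    have h2E : (2 * #G.edgeFinset : ℝ) = Fintype.card V * d := by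
      simp [← hsum, hd.degree_eq]
    have hd0 : (d : ℝ) ≠ 0 := by
      rw [← hd i]
      exact_mod_cast (hdeg i).ne'
    rw [degreeDistribution, h2E, hd i]
    field_simp

end SimpleGraph

theorem pagerank_uniform_eq_degree_iff_regular_general {n : ℕ}
    (G : SimpleGraph (Fin n)) [DecidableRel G.Adj]
    (hdeg : ∀ i, 0 < G.degree i)
    (A : Matrix (Fin n) (Fin n) ℝ)
    (hA : ∀ i j, A i j = if G.Adj i j then 1 / (G.degree i : ℝ) else 0)
    (f : Fin n → ℝ)
    (hf : ∀ i, f i = (G.degree i : ℝ) / (2 * (G.edgeFinset.card : ℝ)))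
    (c : ℝ) (hc0 : 0 < c) (hc1 : c < 1)
    (v : Fin n → ℝ) (hv : ∀ i, v i = 1 / (n : ℝ))
    (π : Fin n → ℝ) (hπ_nonneg : ∀ i, 0 ≤ π i) (hπ_norm : ∑ i, |π i| = 1)
    (hπ_fix : (c • Aᵀ + (1 - c) • Matrix.vecMulVec v 1) *ᵥ π = π) :
    π = f ↔ ∃ d : ℕ, G.IsRegularOfDegree d := by
  replace hA : A = G.randomWalkMatrix := Matrix.ext hA
  replace hf : f = G.degreeDistribution := funext hf
  replace hv : v = fun _ => 1 / (Fintype.card (Fin n) : ℝ) := funext fun i => by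
    rw [hv, Fintype.card_fin]
  have hP : A ∈ rowStochastic ℝ (Fin n) := hA ▸ G.randomWalkMatrix_mem_rowStochastic hdeg
  have hπ_sum : ∑ i, π i = 1 := by simpa only [abs_of_nonneg (hπ_nonneg _)] using hπ_norm
  have hπ : c • (π ᵥ* A) + (1 - c) • v = π := by
    rwa [add_mulVec, smul_mulVec, mulVec_transpose, smul_mulVec, vecMulVec_one_mulVec, hπ_sum,
      one_smul] at hπ_fix
  have hf_fix : c • (f ᵥ* A) + (1 - c) • f = f := by
    rw [hA, hf, G.degreeDistribution_vecMul_randomWalkMatrix]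
    module
  rw [← G.degreeDistribution_eq_uniform_iff hdeg, ← hf, ← hv]
  constructor
  · rintro rfl
    refine (smul_right_injective _ (sub_ne_zero.2 hc1.ne')).eq_iff.1 ?_
    linear_combination (norm := module) hf_fix - hπ
  · intro hfv
    exact eq_of_smul_vecMul_add_eq hP hc0.le hc1 hπ (hfv ▸ hf_fix)

/-- For a finite connected undirected graph with no isolated vertices, the non-personalized
PageRank vector (with uniform personalization vector `v = (1/n)𝟏`) equals the
degree-distribution vector if and only if the graph is regular. -/
theorem pagerank_uniform_eq_degree_iff_regular {n : ℕ}
    (G : SimpleGraph (Fin n)) [DecidableRel G.Adj]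
    (hconn : G.Connected) (hdeg : ∀ i, 0 < G.degree i)
    (A : Matrix (Fin n) (Fin n) ℝ)
    (hA : ∀ i j, A i j = if G.Adj i j then 1 / (G.degree i : ℝ) else 0)
    (f : Fin n → ℝ)
    (hf : ∀ i, f i = (G.degree i : ℝ) / (2 * (G.edgeFinset.card : ℝ)))
    (c : ℝ) (hc0 : 0 < c) (hc1 : c < 1)
    (v : Fin n → ℝ) (hv : ∀ i, v i = 1 / (n : ℝ))
    (π : Fin n → ℝ) (hπ_nonneg : ∀ i, 0 ≤ π i) (hπ_norm : ∑ i, |π i| = 1)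
    (hπ_fix : (c • Aᵀ + (1 - c) • Matrix.vecMulVec v 1) *ᵥ π = π) :
    π = f ↔ ∃ d : ℕ, G.IsRegularOfDegree d :=
  pagerank_uniform_eq_degree_iff_regular_general G hdeg A hA f hf c hc0 hc1 v hv π hπ_nonneg hπ_norm
    hπ_fix
end

section
/- Let A be an n×n row-stochastic matrix, let 0 < c < 1, and let x be any vector in ℝⁿ. Then ‖(1-c)(I - cAᵀ)⁻¹x‖₁ ≤ ‖x‖₁. -/
/-!
A nonnegative matrix with row sums at most `1` acts on row vectors as an `ℓ¹`-contraction, so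
`Aᵀ` does not increase `∑ |yᵢ|`. By the reverse triangle inequality, `M = I - cAᵀ` then satisfies
`(1 - c) ‖y‖₁ ≤ ‖M y‖₁`; this makes `M` injective, hence invertible, and applied to `y = M⁻¹ x`
it is the claimed bound.
-/

open Finset Matrix

variable {ι : Type*} [Fintype ι]

theorem sum_abs_transpose_mulVec_le {A : Matrix ι ι ℝ} (hA_nonneg : ∀ i j, 0 ≤ A i j)
    (hA_row : ∀ i, ∑ j, A i j ≤ 1) (y : ι → ℝ) :
    ∑ j, |(Aᵀ *ᵥ y) j| ≤ ∑ i, |y i| :=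
  calc ∑ j, |(Aᵀ *ᵥ y) j| ≤ ∑ j, ∑ i, A i j * |y i| := by
        refine sum_le_sum fun j _ => (abs_sum_le_sum_abs _ _).trans_eq ?_
        simp only [transpose_apply, abs_mul, abs_of_nonneg (hA_nonneg _ j)]
    _ = ∑ i, (∑ j, A i j) * |y i| := by
        rw [sum_comm]
        simp only [sum_mul]
    _ ≤ ∑ i, |y i| :=
        sum_le_sum fun i _ => mul_le_of_le_one_left (abs_nonneg _) (hA_row i)

theorem one_sub_abs_mul_sum_abs_le_sum_abs_one_sub_smul_mulVec [DecidableEq ι]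
    {B : Matrix ι ι ℝ} (hB : ∀ y, ∑ i, |(B *ᵥ y) i| ≤ ∑ i, |y i|) (c : ℝ) (y : ι → ℝ) :
    (1 - |c|) * ∑ i, |y i| ≤ ∑ i, |((1 - c • B) *ᵥ y) i| := by
  have hpointwise : ∀ i, |y i| - |c| * |(B *ᵥ y) i| ≤ |((1 - c • B) *ᵥ y) i| := fun i => by
    rw [sub_mulVec, smul_mulVec, one_mulVec, Pi.sub_apply, Pi.smul_apply, smul_eq_mul,
      ← abs_mul]
    exact abs_sub_abs_le_abs_sub _ _
  calc (1 - |c|) * ∑ i, |y i| ≤ ∑ i, |y i| - |c| * ∑ i, |(B *ᵥ y) i| := by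
        nlinarith [abs_nonneg c, hB y]
    _ = ∑ i, (|y i| - |c| * |(B *ᵥ y) i|) := by rw [sum_sub_distrib, mul_sum]
    _ ≤ ∑ i, |((1 - c • B) *ᵥ y) i| := sum_le_sum fun i _ => hpointwise i

theorem Matrix.isUnit_det_of_mul_sum_abs_le [DecidableEq ι] {M : Matrix ι ι ℝ} {k : ℝ}
    (hk : 0 < k) (hM : ∀ y, k * ∑ i, |y i| ≤ ∑ i, |(M *ᵥ y) i|) : IsUnit M.det := by
  refine isUnit_iff_ne_zero.2 fun hdet => ?_
  obtain ⟨v, hv, hMv⟩ := exists_mulVec_eq_zero_iff.2 hdet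
  have hv_pos : 0 < ∑ i, |v i| := by
    obtain ⟨i, hi⟩ := Function.ne_iff.1 hv
    exact sum_pos' (fun j _ => abs_nonneg _) ⟨i, mem_univ i, abs_pos.2 hi⟩
  have := hM v
  simp only [hMv, Pi.zero_apply, abs_zero, sum_const_zero] at this
  exact (mul_pos hk hv_pos).not_ge this

/-- For a row-stochastic matrix `A`, `0 < c < 1` and any vector `x`,
`‖(1-c)(I - cAᵀ)⁻¹x‖₁ ≤ ‖x‖₁`. -/
theorem l1_norm_resolvent_mulVec_le {n : ℕ}
    (A : Matrix (Fin n) (Fin n) ℝ)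
    (hA_nonneg : ∀ i j, 0 ≤ A i j) (hA_row : ∀ i, ∑ j, A i j = 1)
    (c : ℝ) (hc0 : 0 < c) (hc1 : c < 1)
    (x : Fin n → ℝ) :
    ∑ i, |((1 - c) • ((((1 : Matrix (Fin n) (Fin n) ℝ) - c • Aᵀ)⁻¹) *ᵥ x)) i| ≤
      ∑ i, |x i| := by
  set M : Matrix (Fin n) (Fin n) ℝ := 1 - c • Aᵀ
  have hM : ∀ y, (1 - c) * ∑ i, |y i| ≤ ∑ i, |(M *ᵥ y) i| := by
    simpa only [abs_of_pos hc0] using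
      one_sub_abs_mul_sum_abs_le_sum_abs_one_sub_smul_mulVec
        (sum_abs_transpose_mulVec_le hA_nonneg (hA_row · |>.le)) c
  have hMy : M *ᵥ (M⁻¹ *ᵥ x) = x := by
    rw [mulVec_mulVec, mul_nonsing_inv M (isUnit_det_of_mul_sum_abs_le (sub_pos.2 hc1) hM),
      one_mulVec]
  calc ∑ i, |((1 - c) • (M⁻¹ *ᵥ x)) i| = (1 - c) * ∑ i, |(M⁻¹ *ᵥ x) i| := by
        simp only [Pi.smul_apply, smul_eq_mul, abs_mul, abs_of_pos (sub_pos.2 hc1), mul_sum]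
    _ ≤ ∑ i, |(M *ᵥ (M⁻¹ *ᵥ x)) i| := hM _
    _ = ∑ i, |x i| := by rw [hMy]
end
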